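/- arXiv:2009.07915 — 10 statements merged into one kernel-verified Lean document; each statement's English description precedes it below -/
import Mathlib

section
/- Let a_j = −1/(x_j − x_A) and a_k = −1/(x_k − x_A) be two singularities of g with a_j < a_k (y_j ≥ 1, y_k ≥ 1) that are consecutive, i.e., there is no index i with y_i ≥ 1 and a_j < −1/(x_i − x_A) < a_k. Then there exists exactly one a in the open interval (a_j, a_k) with g(a) = 0. -/
/-!
With `s i = -1 / (x i - xA)` the `i`-th term of `g a` is `y i / (a - s i)`. On `(s j, s k)` no
term with `y i ≠ 0` has a pole, so each such term is strictly decreasing there and `g` is continuous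
and strictly decreasing. Every term is bounded below by `-y i / (s k - a)` and above by
`y i / (a - s j)` on that interval, so the `j`-th term drives `g` to `+∞` at `s j` and the `k`-th
term drives it to `-∞` at `s k`. The intermediate value theorem gives a zero, strict monotonicity
its uniqueness.
-/

open Set Filter Topology

section PoleSum

variable {ι : Type*} {t : Finset ι} {w s : ι → ℝ} {l r a b c v : ℝ} {j k : ι}

noncomputable def poleSum (t : Finset ι) (w s : ι → ℝ) (a : ℝ) : ℝ := ∑ i ∈ t, w i / (a - s i)

lemma div_sub_lt_div_sub (hv : 0 < v) (hc : c ∉ Ioo l r) (ha : a ∈ Ioo l r) (hb : b ∈ Ioo l r)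
    (hab : a < b) : v / (b - c) < v / (a - c) := by
  rw [mem_Ioo, not_and_or, not_lt, not_lt] at hc
  rcases hc with hc | hc
  · exact div_lt_div_of_pos_left hv (by linarith [ha.1]) (by linarith)
  · rw [← neg_sub c b, ← neg_sub c a, div_neg, div_neg, neg_lt_neg_iff]
    exact div_lt_div_of_pos_left hv (by linarith [hb.2]) (by linarith)

lemma neg_div_sub_le_div_sub (hv : 0 ≤ v) (hc : v ≠ 0 → c ∉ Ioo l r) (ha : a ∈ Ioo l r) :
    -(v / (r - a)) ≤ v / (a - c) := by
  obtain rfl | hv0 := eq_or_ne v 0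
  · simp
  replace hc := hc hv0
  rw [mem_Ioo, not_and_or, not_lt, not_lt] at hc
  rcases hc with hc | hc
  · have := div_nonneg hv (sub_nonneg.2 ha.2.le)
    have := div_nonneg hv (by linarith [ha.1] : 0 ≤ a - c)
    linarith
  · rw [← neg_sub c a, div_neg, neg_le_neg_iff]
    exact div_le_div_of_nonneg_left hv (sub_pos.2 ha.2) (by linarith)

lemma div_sub_le_div_sub_left (hv : 0 ≤ v) (hc : v ≠ 0 → c ∉ Ioo l r) (ha : a ∈ Ioo l r) :
    v / (a - c) ≤ v / (a - l) := by
  obtain rfl | hv0 := eq_or_ne v 0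
  · simp
  replace hc := hc hv0
  rw [mem_Ioo, not_and_or, not_lt, not_lt] at hc
  rcases hc with hc | hc
  · exact div_le_div_of_nonneg_left hv (sub_pos.2 ha.1) (by linarith)
  · have := div_nonneg hv (sub_nonneg.2 ha.1.le)
    have := div_nonpos_of_nonneg_of_nonpos hv (by linarith [ha.2] : a - c ≤ 0)
    linarith

lemma strictAntiOn_poleSum (hw : ∀ i ∈ t, 0 ≤ w i) (hpoles : ∀ i ∈ t, w i ≠ 0 → s i ∉ Ioo l r)
    (hj : j ∈ t) (hwj : 0 < w j) : StrictAntiOn (poleSum t w s) (Ioo l r) := by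
  intro a ha b hb hab
  refine Finset.sum_lt_sum (fun i hi => ?_) ⟨j, hj, ?_⟩
  · rcases (hw i hi).eq_or_lt with h | h
    · simp [← h]
    · exact (div_sub_lt_div_sub h (hpoles i hi h.ne') ha hb hab).le
  · exact div_sub_lt_div_sub hwj (hpoles j hj hwj.ne') ha hb hab

lemma continuousOn_poleSum (hpoles : ∀ i ∈ t, w i ≠ 0 → s i ∉ Ioo l r) :
    ContinuousOn (poleSum t w s) (Ioo l r) := by
  refine continuousOn_finsetSum _ fun i hi => ?_
  by_cases h : w i = 0
  · simp only [h, zero_div]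
    exact continuousOn_const
  · refine continuousOn_const.div (continuousOn_id.sub continuousOn_const) fun a ha => ?_
    exact sub_ne_zero.2 fun hai => hpoles i hi h (hai ▸ ha)

variable [DecidableEq ι]

lemma le_poleSum_of_eq_left (hw : ∀ i ∈ t, 0 ≤ w i)
    (hpoles : ∀ i ∈ t, w i ≠ 0 → s i ∉ Ioo l r) (hj : j ∈ t) (hsj : s j = l) (ha : a ∈ Ioo l r) :
    w j / (a - l) - (∑ i ∈ t.erase j, w i) / (r - a) ≤ poleSum t w s a := by
  rw [poleSum, ← Finset.add_sum_erase t _ hj, hsj, Finset.sum_div, sub_eq_add_neg,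
    ← Finset.sum_neg_distrib]
  refine add_le_add_right (Finset.sum_le_sum fun i hi => ?_) _
  have hi := Finset.mem_of_mem_erase hi
  exact neg_div_sub_le_div_sub (hw i hi) (hpoles i hi) ha

lemma poleSum_le_of_eq_right (hw : ∀ i ∈ t, 0 ≤ w i)
    (hpoles : ∀ i ∈ t, w i ≠ 0 → s i ∉ Ioo l r) (hk : k ∈ t) (hsk : s k = r) (ha : a ∈ Ioo l r) :
    poleSum t w s a ≤ (∑ i ∈ t.erase k, w i) / (a - l) - w k / (r - a) := by
  rw [poleSum, ← Finset.add_sum_erase t _ hk, hsk, ← neg_sub r a, div_neg, neg_add_eq_sub,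
    Finset.sum_div]
  refine sub_le_sub_right (Finset.sum_le_sum fun i hi => ?_) _
  have hi := Finset.mem_of_mem_erase hi
  exact div_sub_le_div_sub_left (hw i hi) (hpoles i hi) ha

lemma tendsto_div_sub_nhdsGT (hv : 0 < v) : Tendsto (fun a => v / (a - c)) (𝓝[>] c) atTop := by
  have h : Tendsto (fun a => a - c) (𝓝[>] c) (𝓝[>] 0) := tendsto_nhdsWithin_iff.2
    ⟨((continuous_sub_right c).tendsto' c 0 (sub_self c)).mono_left nhdsWithin_le_nhds,
      eventually_mem_nhdsWithin.mono fun a (ha : c < a) => (sub_pos.2 ha : 0 < a - c)⟩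
  simpa only [div_eq_mul_inv, Pi.inv_apply] using h.inv_tendsto_nhdsGT_zero.const_mul_atTop hv

lemma tendsto_div_sub_nhdsLT (hv : 0 < v) : Tendsto (fun a => v / (c - a)) (𝓝[<] c) atTop := by
  have h : Tendsto (fun a => c - a) (𝓝[<] c) (𝓝[>] 0) := tendsto_nhdsWithin_iff.2
    ⟨((continuous_sub_left c).tendsto' c 0 (sub_self c)).mono_left nhdsWithin_le_nhds,
      eventually_mem_nhdsWithin.mono fun a (ha : a < c) => (sub_pos.2 ha : 0 < c - a)⟩
  simpa only [div_eq_mul_inv, Pi.inv_apply] using h.inv_tendsto_nhdsGT_zero.const_mul_atTop hv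

lemma tendsto_poleSum_nhdsGT (hw : ∀ i ∈ t, 0 ≤ w i)
    (hpoles : ∀ i ∈ t, w i ≠ 0 → s i ∉ Ioo l r) (hj : j ∈ t) (hwj : 0 < w j) (hsj : s j = l)
    (hlr : l < r) : Tendsto (poleSum t w s) (𝓝[>] l) atTop := by
  have hrest : Tendsto (fun a => (∑ i ∈ t.erase j, w i) / (r - a)) (𝓝[>] l)
      (𝓝 ((∑ i ∈ t.erase j, w i) / (r - l))) :=
    (tendsto_const_nhds.div (tendsto_const_nhds.sub tendsto_id) (sub_pos.2 hlr).ne').mono_left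
      nhdsWithin_le_nhds
  refine tendsto_atTop_mono' _ ?_ ((tendsto_div_sub_nhdsGT hwj).atTop_add hrest.neg)
  filter_upwards [Ioo_mem_nhdsGT hlr] with a ha
  exact le_poleSum_of_eq_left hw hpoles hj hsj ha

lemma tendsto_poleSum_nhdsLT (hw : ∀ i ∈ t, 0 ≤ w i)
    (hpoles : ∀ i ∈ t, w i ≠ 0 → s i ∉ Ioo l r) (hk : k ∈ t) (hwk : 0 < w k) (hsk : s k = r)
    (hlr : l < r) : Tendsto (poleSum t w s) (𝓝[<] r) atBot := by
  have hrest : Tendsto (fun a => (∑ i ∈ t.erase k, w i) / (a - l)) (𝓝[<] r)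
      (𝓝 ((∑ i ∈ t.erase k, w i) / (r - l))) :=
    (tendsto_const_nhds.div (tendsto_id.sub_const l) (sub_pos.2 hlr).ne').mono_left
      nhdsWithin_le_nhds
  refine tendsto_atBot_mono' _ ?_ (hrest.add_atBot (tendsto_neg_atTop_atBot.comp
    (tendsto_div_sub_nhdsLT hwk)))
  filter_upwards [Ioo_mem_nhdsLT hlr] with a ha
  exact poleSum_le_of_eq_right hw hpoles hk hsk ha

theorem existsUnique_poleSum_eq_zero (hw : ∀ i ∈ t, 0 ≤ w i)
    (hpoles : ∀ i ∈ t, w i ≠ 0 → s i ∉ Ioo (s j) (s k)) (hj : j ∈ t) (hk : k ∈ t)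
    (hwj : 0 < w j) (hwk : 0 < w k) (hjk : s j < s k) :
    ∃! a, a ∈ Ioo (s j) (s k) ∧ poleSum t w s a = 0 := by
  obtain ⟨a, ha, ha0⟩ := (continuousOn_poleSum hpoles).surjOn_of_tendsto' (nonempty_Ioo.2 hjk)
    ((tendsto_comp_coe_Ioo_atBot hjk).2 (tendsto_poleSum_nhdsGT hw hpoles hj hwj rfl hjk))
    ((tendsto_comp_coe_Ioo_atTop hjk).2 (tendsto_poleSum_nhdsLT hw hpoles hk hwk rfl hjk))
    (mem_univ 0)
  exact ⟨a, ⟨ha, ha0⟩, fun b hb =>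
    (strictAntiOn_poleSum hw hpoles hj hwj).injOn hb.1 ha (hb.2.trans ha0.symm)⟩

end PoleSum

-- At `1 + a * c = 0` both sides are `0`, by the convention `x / 0 = 0`.
lemma mul_div_one_add_mul_eq_div_sub (v a : ℝ) {c : ℝ} (hc : c ≠ 0) :
    v * c / (1 + a * c) = v / (a - -1 / c) := by
  rw [show a - -1 / c = (1 + a * c) / c by field_simp; ring, div_div_eq_mul_div]

/-- Between two consecutive singularities `a_j = -1/(x j - xA)` and
`a_k = -1/(x k - xA)` of `g`, there is exactly one zero of `g`. -/
theorem cash_linear_g_unique_zero_between_singularities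
    (N : ℕ) (x : Fin N → ℝ) (xA xB : ℝ)
    (hx : ∀ i, xA < x i ∧ x i < xB)
    (y : Fin N → ℕ) (j k : Fin N) (hyj : 1 ≤ y j) (hyk : 1 ≤ y k)
    (hjk : -1 / (x j - xA) < -1 / (x k - xA))
    (hconsec : ¬ ∃ i, 1 ≤ y i ∧ -1 / (x j - xA) < -1 / (x i - xA) ∧
      -1 / (x i - xA) < -1 / (x k - xA))
    (g : ℝ → ℝ)
    (hg : ∀ a, g a = ∑ i, (y i : ℝ) * (x i - xA) / (1 + a * (x i - xA))) :
    ∃! a, a ∈ Set.Ioo (-1 / (x j - xA)) (-1 / (x k - xA)) ∧ g a = 0 := by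
  have hg' : g = poleSum Finset.univ (fun i => (y i : ℝ)) (fun i => -1 / (x i - xA)) :=
    funext fun a => (hg a).trans <| Finset.sum_congr rfl fun i _ =>
      mul_div_one_add_mul_eq_div_sub _ a (sub_pos.2 (hx i).1).ne'
  have hpoles : ∀ i ∈ Finset.univ, (y i : ℝ) ≠ 0 →
      -1 / (x i - xA) ∉ Ioo (-1 / (x j - xA)) (-1 / (x k - xA)) := fun i _ hi hmem =>
    hconsec ⟨i, Nat.one_le_iff_ne_zero.2 (mod_cast hi), hmem⟩
  subst hg'
  exact existsUnique_poleSum_eq_zero (s := fun i => -1 / (x i - xA))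
    (fun i _ => Nat.cast_nonneg _) hpoles (Finset.mem_univ j) (Finset.mem_univ k)
    (mod_cast hyj) (mod_cast hyk) hjk
end

section
/- Assume M ≥ 1 and R > 0. Let a_s be a real number with g(a_s) = 0 and 1 + a_s·(x_i − x_A) ≠ 0 for all i with y_i > 0. Then F(a) tends to −∞ as a tends to a_s from the left and F(a) tends to +∞ as a tends to a_s from the right. -/
/-!
Near a zero `aₛ` of `g` the function `g` is differentiable with derivative
`g' aₛ = -∑ yᵢ bᵢ² / (1 + aₛ bᵢ)² < 0` (where `bᵢ = xᵢ - x_A > 0`), so `g` is positive just left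
of `aₛ` and negative just right of it. Hence `M / g` tends to `+∞` from the left and to `-∞`
from the right, and `F = 1 + (R/2)(a - M/g)` inherits the opposite limits.
-/

open Filter Set Topology

section RationalSum

variable {ι : Type*} [Fintype ι] (w b : ι → ℝ) (a : ℝ)

theorem hasDerivAt_mul_div_one_add_mul (c d : ℝ) (h : c ≠ 0 → 1 + a * d ≠ 0) :
    HasDerivAt (fun t => c * d / (1 + t * d)) (-(c * d ^ 2) / (1 + a * d) ^ 2) a := by
  rcases eq_or_ne c 0 with rfl | hc
  · simpa using hasDerivAt_const a (0 : ℝ)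
  have hden : HasDerivAt (fun t => 1 + t * d) d a := by
    simpa using ((hasDerivAt_id a).mul_const d).const_add 1
  exact ((hasDerivAt_const a (c * d)).div hden (h hc)).congr_deriv (by ring)

theorem hasDerivAt_sum_mul_div_one_add_mul (h : ∀ i, w i ≠ 0 → 1 + a * b i ≠ 0) :
    HasDerivAt (fun t => ∑ i, w i * b i / (1 + t * b i))
      (-∑ i, w i * b i ^ 2 / (1 + a * b i) ^ 2) a := by
  have := HasDerivAt.fun_sum fun i (_ : i ∈ Finset.univ) =>
    hasDerivAt_mul_div_one_add_mul a (w i) (b i) (h i)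
  simpa only [neg_div, Finset.sum_neg_distrib] using this

theorem sum_mul_sq_div_sq_pos (hw : ∀ i, 0 ≤ w i) (hw₀ : ∃ i, 0 < w i) (hb : ∀ i, b i ≠ 0)
    (h : ∀ i, w i ≠ 0 → 1 + a * b i ≠ 0) :
    0 < ∑ i, w i * b i ^ 2 / (1 + a * b i) ^ 2 := by
  obtain ⟨i₀, hi₀⟩ := hw₀
  refine Finset.sum_pos' (fun i _ => by have := hw i; positivity) ⟨i₀, Finset.mem_univ _, ?_⟩
  have := hb i₀
  have := h i₀ hi₀.ne'
  positivity

end RationalSum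

theorem tendsto_nhdsLT_nhdsGT_zero_of_deriv_neg {f : ℝ → ℝ} {x₀ : ℝ} (hf : deriv f x₀ < 0)
    (hx : f x₀ = 0) :
    Tendsto f (𝓝[<] x₀) (𝓝[>] 0) ∧ Tendsto f (𝓝[>] x₀) (𝓝[<] 0) := by
  have hcont : Tendsto f (𝓝 x₀) (𝓝 0) :=
    hx ▸ (differentiableAt_of_deriv_ne_zero hf.ne).continuousAt.tendsto
  have hsign := eventually_nhdsWithin_sign_eq_of_deriv_neg hf hx
  constructor
  · refine tendsto_nhdsWithin_of_tendsto_nhds_of_eventually_within f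
      (hcont.mono_left nhdsWithin_le_nhds) ?_
    filter_upwards [nhdsWithin_le_nhds hsign, self_mem_nhdsWithin] with t ht (htx : t < x₀)
    rwa [mem_Ioi, ← sign_eq_one_iff, ht, sign_eq_one_iff, sub_pos]
  · refine tendsto_nhdsWithin_of_tendsto_nhds_of_eventually_within f
      (hcont.mono_left nhdsWithin_le_nhds) ?_
    filter_upwards [nhdsWithin_le_nhds hsign, self_mem_nhdsWithin] with t ht (htx : x₀ < t)
    rwa [mem_Iio, ← sign_eq_neg_one_iff, ht, sign_eq_neg_one_iff, sub_neg]

section Blowup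

variable {l : Filter ℝ} {a₀ c k M : ℝ} {g : ℝ → ℝ}

theorem tendsto_add_mul_sub_div_atBot (hl : l ≤ 𝓝 a₀) (hk : 0 < k) (hM : 0 < M)
    (hg : Tendsto g l (𝓝[>] 0)) :
    Tendsto (fun a => c + k * (a - M / g a)) l atBot := by
  have hdiv : Tendsto (fun a => M / g a) l atTop := by
    simpa only [div_eq_mul_inv, Pi.inv_apply] using hg.inv_tendsto_nhdsGT_zero.const_mul_atTop hM
  have hsub : Tendsto (fun a => a - M / g a) l atBot := by
    simpa only [sub_eq_add_neg, id, Function.comp_apply] using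
      (tendsto_id.mono_left hl).add_atBot (tendsto_neg_atTop_atBot.comp hdiv)
  exact tendsto_atBot_add_const_left l c (hsub.const_mul_atBot hk)

theorem tendsto_add_mul_sub_div_atTop (hl : l ≤ 𝓝 a₀) (hk : 0 < k) (hM : 0 < M)
    (hg : Tendsto g l (𝓝[<] 0)) :
    Tendsto (fun a => c + k * (a - M / g a)) l atTop := by
  have hdiv : Tendsto (fun a => M / g a) l atBot := by
    simpa only [div_eq_mul_inv, Pi.inv_apply] using hg.inv_tendsto_nhdsLT_zero.const_mul_atBot hM
  have hsub : Tendsto (fun a => a - M / g a) l atTop := by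
    simpa only [sub_eq_add_neg, id, Function.comp_apply] using
      (tendsto_id.mono_left hl).add_atTop (tendsto_neg_atBot_atTop.comp hdiv)
  exact tendsto_atTop_add_const_left l c (hsub.const_mul_atTop hk)

end Blowup

theorem cash_linear_F_singularity_limits_general
    (N : ℕ) (x : Fin N → ℝ) (xA xB R : ℝ)
    (hx : ∀ i, xA < x i ∧ x i < xB)
    (hRpos : 0 < R)
    (y : Fin N → ℕ) (hM : 1 ≤ ∑ i, y i)
    (g F : ℝ → ℝ)
    (hg : ∀ a, g a = ∑ i, (y i : ℝ) * (x i - xA) / (1 + a * (x i - xA)))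
    (hF : ∀ a, F a = 1 + (R / 2) * (a - (∑ i, (y i : ℝ)) / g a))
    (as : ℝ) (hdom : ∀ i, 0 < y i → 1 + as * (x i - xA) ≠ 0) (hgs : g as = 0) :
    Filter.Tendsto F (nhdsWithin as (Set.Iio as)) Filter.atBot ∧
    Filter.Tendsto F (nhdsWithin as (Set.Ioi as)) Filter.atTop := by
  have hdom' : ∀ i, (y i : ℝ) ≠ 0 → 1 + as * (x i - xA) ≠ 0 := fun i hi =>
    hdom i (Nat.pos_of_ne_zero (by exact_mod_cast hi))
  have hMpos : (0 : ℝ) < ∑ i, (y i : ℝ) := by exact_mod_cast hM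
  have hderiv : deriv g as < 0 := by
    obtain ⟨i₀, -, hi₀⟩ := Finset.exists_ne_zero_of_sum_ne_zero hMpos.ne'
    rw [funext hg, (hasDerivAt_sum_mul_div_one_add_mul _ _ as hdom').deriv, neg_lt_zero]
    exact sum_mul_sq_div_sq_pos _ _ as (fun i => Nat.cast_nonneg _)
      ⟨i₀, (Nat.cast_nonneg _).lt_of_ne' hi₀⟩ (fun i => (sub_pos.2 (hx i).1).ne') hdom'
  obtain ⟨hleft, hright⟩ := tendsto_nhdsLT_nhdsGT_zero_of_deriv_neg hderiv hgs
  rw [funext hF]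
  exact ⟨tendsto_add_mul_sub_div_atBot nhdsWithin_le_nhds (half_pos hRpos) hMpos hleft,
    tendsto_add_mul_sub_div_atTop nhdsWithin_le_nhds (half_pos hRpos) hMpos hright⟩

/-- At a point of singularity `a_s` of `F`, i.e. a zero of `g` in the
domain of `g`, `F` tends to `-∞` from the left and to `+∞` from the right. -/
theorem cash_linear_F_singularity_limits
    (N : ℕ) (x : Fin N → ℝ) (xA xB R : ℝ)
    (hx : ∀ i, xA < x i ∧ x i < xB)
    (hR : R = xB - xA) (hRpos : 0 < R)
    (y : Fin N → ℕ) (hM : 1 ≤ ∑ i, y i)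
    (g F : ℝ → ℝ)
    (hg : ∀ a, g a = ∑ i, (y i : ℝ) * (x i - xA) / (1 + a * (x i - xA)))
    (hF : ∀ a, F a = 1 + (R / 2) * (a - (∑ i, (y i : ℝ)) / g a))
    (as : ℝ) (hdom : ∀ i, 0 < y i → 1 + as * (x i - xA) ≠ 0) (hgs : g as = 0) :
    Filter.Tendsto F (nhdsWithin as (Set.Iio as)) Filter.atBot ∧
    Filter.Tendsto F (nhdsWithin as (Set.Ioi as)) Filter.atTop :=
  cash_linear_F_singularity_limits_general N x xA xB R hx hRpos y hM g F hg hF as hdom hgs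
end

section
/- Assume M ≥ 1. Then F(a) converges as a → +∞ and as a → −∞, and both limits equal F_∞ = 1 − (R/(2M))·Σ_{i=1}^N y_i/(x_i − x_A). -/
/-!
Write `t i = x i - xA ≠ 0` and `h a = ∑ y i / (1 + a t i)`.
Since `a t / (1 + a t) = 1 - 1 / (1 + a t)`, `a g(a) = M - h(a)`, hence
`a - M / g(a) = -h(a) / g(a) = -(a h(a)) / (a g(a))`. Because `a / (1 + a t) → 1 / t`
as `|a| → ∞`, we get `a h(a) → ∑ y i / t i` and `a g(a) → M ≠ 0`. Working along the
cobounded filter of `ℝ`, which is `atBot ⊔ atTop`, gives both limits at once.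
-/

open Filter Bornology Topology Finset

section

variable {𝕜 ι : Type*} [NormedField 𝕜] [Fintype ι]

lemma tendsto_div_one_add_mul_cobounded {t : 𝕜} (ht : t ≠ 0) :
    Tendsto (fun a : 𝕜 => a / (1 + a * t)) (cobounded 𝕜) (𝓝 t⁻¹) := by
  have h : Tendsto (fun a : 𝕜 => (a⁻¹ + t)⁻¹) (cobounded 𝕜) (𝓝 t⁻¹) := by
    simpa using (tendsto_inv₀_cobounded.add_const t).inv₀ (by rwa [zero_add])
  refine h.congr' ?_
  filter_upwards [eventually_ne_cobounded 0] with a ha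
  rw [← inv_div]
  field_simp

lemma tendsto_mul_sum_div_one_add_mul_cobounded (w t : ι → 𝕜) (ht : ∀ i, t i ≠ 0) :
    Tendsto (fun a : 𝕜 => a * ∑ i, w i / (1 + a * t i)) (cobounded 𝕜)
      (𝓝 (∑ i, w i / t i)) := by
  simp_rw [mul_sum, mul_div_left_comm _ (w _), div_eq_mul_inv (w _) (t _)]
  exact tendsto_finsetSum _ fun i _ => (tendsto_div_one_add_mul_cobounded (ht i)).const_mul (w i)

lemma mul_sum_mul_div_one_add_mul (w t : ι → 𝕜) {a : 𝕜} (ha : ∀ i, 1 + a * t i ≠ 0) :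
    a * ∑ i, w i * t i / (1 + a * t i) = ∑ i, w i - ∑ i, w i / (1 + a * t i) := by
  rw [mul_sum, ← sum_sub_distrib]
  refine sum_congr rfl fun i _ => ?_
  field_simp [ha i]
  ring

lemma tendsto_sub_sum_div_sum_mul_div_one_add_mul_cobounded (w t : ι → 𝕜)
    (ht : ∀ i, t i ≠ 0) (hw : ∑ i, w i ≠ 0) :
    Tendsto (fun a : 𝕜 => a - (∑ i, w i) / ∑ i, w i * t i / (1 + a * t i)) (cobounded 𝕜)
      (𝓝 (-(∑ i, w i / t i) / ∑ i, w i)) := by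
  have hG : Tendsto (fun a => a * ∑ i, w i * t i / (1 + a * t i)) (cobounded 𝕜)
      (𝓝 (∑ i, w i)) := by
    simpa [mul_div_cancel_right₀ _ (ht _)] using
      tendsto_mul_sum_div_one_add_mul_cobounded (fun i => w i * t i) t ht
  have hH : Tendsto (fun a => a * ∑ i, w i / (1 + a * t i)) (cobounded 𝕜)
      (𝓝 (∑ i, w i / t i)) :=
    tendsto_mul_sum_div_one_add_mul_cobounded w t ht
  have hpole : ∀ᶠ a in cobounded 𝕜, ∀ i, 1 + a * t i ≠ 0 :=
    eventually_all.2 fun i => (eventually_ne_cobounded (-(t i)⁻¹)).mono fun a ha h => by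
      apply ha
      field_simp [ht i]
      linear_combination h
  refine (hH.neg.div hG hw).congr' ?_
  symm
  filter_upwards [hpole, hG.eventually_ne hw] with a hpole haG
  have hG0 := right_ne_zero_of_mul haG
  calc a - (∑ i, w i) / ∑ i, w i * t i / (1 + a * t i)
      = (a * ∑ i, w i * t i / (1 + a * t i) - ∑ i, w i) / ∑ i, w i * t i / (1 + a * t i) := by
        field_simp
    _ = -(∑ i, w i / (1 + a * t i)) / ∑ i, w i * t i / (1 + a * t i) := by
        rw [mul_sum_mul_div_one_add_mul w t hpole]
        ring
    _ = -(a * ∑ i, w i / (1 + a * t i)) / (a * ∑ i, w i * t i / (1 + a * t i)) := by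
        rw [← mul_neg, mul_div_mul_left _ _ (left_ne_zero_of_mul haG)]

end


theorem cash_linear_F_asymptotic_limit_general
    (N : ℕ) (x : Fin N → ℝ) (xA xB R : ℝ)
    (hx : ∀ i, xA < x i ∧ x i < xB)
    (y : Fin N → ℕ) (hM : 1 ≤ ∑ i, y i)
    (g F : ℝ → ℝ)
    (hg : ∀ a, g a = ∑ i, (y i : ℝ) * (x i - xA) / (1 + a * (x i - xA)))
    (hF : ∀ a, F a = 1 + (R / 2) * (a - (∑ i, (y i : ℝ)) / g a)) :
    Filter.Tendsto F Filter.atTop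
      (nhds (1 - (R / (2 * ∑ i, (y i : ℝ))) * ∑ i, (y i : ℝ) / (x i - xA))) ∧
    Filter.Tendsto F Filter.atBot
      (nhds (1 - (R / (2 * ∑ i, (y i : ℝ))) * ∑ i, (y i : ℝ) / (x i - xA))) := by
  have ht : ∀ i, x i - xA ≠ 0 := fun i => (sub_pos.2 (hx i).1).ne'
  have hM' : (∑ i, (y i : ℝ)) ≠ 0 := by
    rw [← Nat.cast_sum]
    exact Nat.cast_ne_zero.2 (by omega)
  have hlim : Tendsto F (cobounded ℝ)
      (𝓝 (1 - (R / (2 * ∑ i, (y i : ℝ))) * ∑ i, (y i : ℝ) / (x i - xA))) := by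
    simp only [funext hF, hg]
    convert ((tendsto_sub_sum_div_sum_mul_div_one_add_mul_cobounded _ _ ht hM').const_mul
      (R / 2)).const_add 1 using 2
    ring
  rw [IsOrderBornology.cobounded_eq, tendsto_sup] at hlim
  exact hlim.symm

/-- For `M ≥ 1`, `F(a)` converges as `a → ±∞`, and both limits equal
`F_∞ = 1 - (R/(2M)) * ∑ i, y i / (x i - xA)`. -/
theorem cash_linear_F_asymptotic_limit
    (N : ℕ) (x : Fin N → ℝ) (xA xB R : ℝ)
    (hx : ∀ i, xA < x i ∧ x i < xB)
    (hR : R = xB - xA) (hRpos : 0 < R)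
    (y : Fin N → ℕ) (hM : 1 ≤ ∑ i, y i)
    (g F : ℝ → ℝ)
    (hg : ∀ a, g a = ∑ i, (y i : ℝ) * (x i - xA) / (1 + a * (x i - xA)))
    (hF : ∀ a, F a = 1 + (R / 2) * (a - (∑ i, (y i : ℝ)) / g a)) :
    Filter.Tendsto F Filter.atTop
      (nhds (1 - (R / (2 * ∑ i, (y i : ℝ))) * ∑ i, (y i : ℝ) / (x i - xA))) ∧
    Filter.Tendsto F Filter.atBot
      (nhds (1 - (R / (2 * ∑ i, (y i : ℝ))) * ∑ i, (y i : ℝ) / (x i - xA))) :=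
  cash_linear_F_asymptotic_limit_general N x xA xB R hx y hM g F hg hF
end

section
/- Assume M ≥ 1. At every real number a such that 1 + a·(x_i − x_A) ≠ 0 for all i with y_i > 0 and g(a) ≠ 0, the Cauchy–Schwarz inequality yields g'(a)/g(a)² ≤ −1/M, where g'(a) = −Σ_{i=1}^N y_i·(x_i − x_A)²/(1 + a·(x_i − x_A))². -/
/-!
With weights `y i` and `f i = (x i - xA) / (1 + a * (x i - xA))` we have `g a = ∑ y i * f i` and
`-g' a = ∑ y i * f i ^ 2`, so weighted Cauchy–Schwarz gives `g a ^ 2 ≤ M * (-g' a)`.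
-/

open Finset

namespace Finset

variable {ι R : Type*} [Field R] [LinearOrder R] [IsStrictOrderedRing R]

theorem sq_sum_mul_le_sum_mul_sum_mul_sq (s : Finset ι) {w : ι → R}
    (hw : ∀ i ∈ s, 0 ≤ w i) (f : ι → R) :
    (∑ i ∈ s, w i * f i) ^ 2 ≤ (∑ i ∈ s, w i) * ∑ i ∈ s, w i * f i ^ 2 :=
  sum_sq_le_sum_mul_sum_of_sq_le_mul s hw (fun i hi => mul_nonneg (hw i hi) (sq_nonneg _))
    fun i _ => (by ring : (w i * f i) ^ 2 = w i * (w i * f i ^ 2)).le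

theorem neg_sum_mul_sq_div_sq_sum_mul_le (s : Finset ι) {w : ι → R}
    (hw : ∀ i ∈ s, 0 ≤ w i) (hw₀ : 0 < ∑ i ∈ s, w i) (f : ι → R)
    (hwf : ∑ i ∈ s, w i * f i ≠ 0) :
    (-∑ i ∈ s, w i * f i ^ 2) / (∑ i ∈ s, w i * f i) ^ 2 ≤ -1 / ∑ i ∈ s, w i := by
  rw [neg_div, neg_div, neg_le_neg_iff, div_le_div_iff₀ hw₀ (by positivity), one_mul]
  exact (sq_sum_mul_le_sum_mul_sum_mul_sq s hw f).trans_eq (mul_comm _ _)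

end Finset

theorem cash_linear_gprime_over_gsq_le_general
    (N : ℕ) (x : Fin N → ℝ) (xA : ℝ)
    (y : Fin N → ℕ) (hM : 1 ≤ ∑ i, y i)
    (g : ℝ → ℝ)
    (hg : ∀ a, g a = ∑ i, (y i : ℝ) * (x i - xA) / (1 + a * (x i - xA)))
    (a : ℝ) (hga : g a ≠ 0) :
    (-∑ i, (y i : ℝ) * (x i - xA) ^ 2 / (1 + a * (x i - xA)) ^ 2) / (g a) ^ 2
      ≤ -1 / (∑ i, (y i : ℝ)) := by
  set f : Fin N → ℝ := fun i => (x i - xA) / (1 + a * (x i - xA))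
  have hM₀ : (0 : ℝ) < ∑ i, (y i : ℝ) := by exact_mod_cast hM
  have hga' : ∑ i, (y i : ℝ) * f i ≠ 0 := by simpa only [hg, mul_div_assoc] using hga
  have key := neg_sum_mul_sq_div_sq_sum_mul_le univ (fun i _ => (y i).cast_nonneg) hM₀ f hga'
  simpa only [f, hg, div_pow, mul_div_assoc] using key

/-- For `M ≥ 1`, at every point `a` in the domain of `g` with `g a ≠ 0`,
the Cauchy–Schwarz inequality yields `g'(a) / g(a)^2 ≤ -1/M`, where
`g'(a) = -∑ i, y i * (x i - xA)^2 / (1 + a * (x i - xA))^2`. -/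
theorem cash_linear_gprime_over_gsq_le
    (N : ℕ) (x : Fin N → ℝ) (xA xB : ℝ)
    (hx : ∀ i, xA < x i ∧ x i < xB)
    (y : Fin N → ℕ) (hM : 1 ≤ ∑ i, y i)
    (g : ℝ → ℝ)
    (hg : ∀ a, g a = ∑ i, (y i : ℝ) * (x i - xA) / (1 + a * (x i - xA)))
    (a : ℝ) (ha : ∀ i, 0 < y i → 1 + a * (x i - xA) ≠ 0) (hga : g a ≠ 0) :
    (-∑ i, (y i : ℝ) * (x i - xA) ^ 2 / (1 + a * (x i - xA)) ^ 2) / (g a) ^ 2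
      ≤ -1 / (∑ i, (y i : ℝ)) :=
  cash_linear_gprime_over_gsq_le_general N x xA y hM g hg a hga
end

section
/- Assume M ≥ 1, N ≥ 2, Δx_1 > 0, Δx_N > 0, Δx_1 + Δx_N ≤ R, and define λ(a) = M/(R·(1 + a·R/2)) for a ≠ −2/R. Then for every real a ≠ −2/R, the two conditions λ(a)·(1 + a·Δx_1/2) ≥ 0 and λ(a)·(1 + a·(R − Δx_N/2)) ≥ 0 hold simultaneously if and only if a does not lie in the open interval (−2/Δx_1, −1/(R − Δx_N/2)). -/
/-! The sign of `λ(a)` is that of `1 + a R / 2`, which vanishes at `-2/R`; the two bin-center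
factors vanish at `-2/Δx₁` and `-1/(R - Δx_N/2)`. The hypothesis `Δx₁ + Δx_N ≤ R` puts `-2/R`
strictly between these two roots. Hence for `a > -2/R` the first factor is automatically
positive and only `a ≥ -1/(R - Δx_N/2)` remains, while for `a < -2/R` the second factor is
automatically negative and only `a ≤ -2/Δx₁` remains. -/

section AffineSign

variable {a c : ℝ}

lemma one_add_mul_nonneg_iff (hc : 0 < c) : 0 ≤ 1 + a * c ↔ -1 / c ≤ a := by
  rw [div_le_iff₀ hc]
  constructor <;> intro <;> linarith

lemma one_add_mul_nonpos_iff (hc : 0 < c) : 1 + a * c ≤ 0 ↔ a ≤ -1 / c := by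
  rw [le_div_iff₀ hc]
  constructor <;> intro <;> linarith

lemma one_add_mul_pos_iff (hc : 0 < c) : 0 < 1 + a * c ↔ -1 / c < a := by
  rw [div_lt_iff₀ hc]
  constructor <;> intro <;> linarith

lemma neg_one_div_lt_neg_one_div {c c' : ℝ} (hc : 0 < c) (h : c < c') : -1 / c < -1 / c' := by
  simpa only [neg_div, neg_lt_neg_iff] using one_div_lt_one_div_of_lt hc h

lemma mul_nonneg_iff_of_neg_left {l p : ℝ} (hl : l < 0) : 0 ≤ l * p ↔ p ≤ 0 := by
  constructor <;> intro <;> nlinarith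

theorem mul_one_add_mul_nonneg_both_iff {l c₀ c₁ c₂ : ℝ} (hc₁ : 0 < c₁) (h₁₀ : c₁ < c₀)
    (h₀₂ : c₀ < c₂) (hl : l ≠ 0) (hsign : 0 < l ↔ -1 / c₀ < a) :
    (0 ≤ l * (1 + a * c₁) ∧ 0 ≤ l * (1 + a * c₂)) ↔ a ∉ Set.Ioo (-1 / c₁) (-1 / c₂) := by
  have hc₀ : 0 < c₀ := hc₁.trans h₁₀
  have hc₂ : 0 < c₂ := hc₀.trans h₀₂
  have ht₁₀ := neg_one_div_lt_neg_one_div hc₁ h₁₀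
  have ht₀₂ := neg_one_div_lt_neg_one_div hc₀ h₀₂
  rw [Set.mem_Ioo, not_and_or, not_lt, not_lt]
  rcases hl.lt_or_gt with hneg | hpos
  · have ha : a ≤ -1 / c₀ := not_lt.mp (mt hsign.mpr hneg.not_gt)
    rw [mul_nonneg_iff_of_neg_left hneg, mul_nonneg_iff_of_neg_left hneg,
      one_add_mul_nonpos_iff hc₁, one_add_mul_nonpos_iff hc₂]
    constructor
    · exact fun h => Or.inl h.1
    · rintro (h | h)
      · exact ⟨h, by linarith⟩
      · linarith
  · have ha : -1 / c₀ < a := hsign.mp hpos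
    rw [mul_nonneg_iff_of_pos_left hpos, mul_nonneg_iff_of_pos_left hpos,
      one_add_mul_nonneg_iff hc₁, one_add_mul_nonneg_iff hc₂]
    constructor
    · exact fun h => Or.inr h.2
    · rintro (h | h)
      · linarith
      · exact ⟨by linarith, h⟩

end AffineSign

theorem cash_linear_acceptability_interval_general
    (M : ℕ) (hM : 1 ≤ M)
    (R Δx₁ ΔxN : ℝ) (hR : 0 < R) (hΔ₁ : 0 < Δx₁) (hΔN : 0 < ΔxN)
    (hsum : Δx₁ + ΔxN ≤ R)
    (lam : ℝ → ℝ) (hlam : ∀ a, lam a = (M : ℝ) / (R * (1 + a * R / 2))) :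
    ∀ a : ℝ, a ≠ -2 / R →
      ((0 ≤ lam a * (1 + a * Δx₁ / 2) ∧ 0 ≤ lam a * (1 + a * (R - ΔxN / 2))) ↔
        a ∉ Set.Ioo (-2 / Δx₁) (-1 / (R - ΔxN / 2))) := by
  intro a ha
  have hM' : (0 : ℝ) < M := by exact_mod_cast hM
  have hD : 1 + a * (R / 2) ≠ 0 := by
    contrapose! ha
    field_simp
    linarith
  have hlam' : lam a = M / R / (1 + a * (R / 2)) := by
    rw [hlam, div_div, mul_div_assoc]
  have hsign : 0 < lam a ↔ -1 / (R / 2) < a := by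
    rw [hlam', div_pos_iff_of_pos_left (div_pos hM' hR), one_add_mul_pos_iff (half_pos hR)]
  have key := mul_one_add_mul_nonneg_both_iff (c₂ := R - ΔxN / 2) (half_pos hΔ₁)
    (by linarith) (by linarith) (by rw [hlam']; exact div_ne_zero (div_pos hM' hR).ne' hD) hsign
  rwa [show -1 / (Δx₁ / 2) = -2 / Δx₁ by field_simp, ← mul_div_assoc] at key

/-- With `λ(a) = M / (R * (1 + a*R/2))`, for every `a ≠ -2/R` the
nonnegativity conditions `λ(a)*(1 + a*Δx₁/2) ≥ 0` and `λ(a)*(1 + a*(R - Δx_N/2)) ≥ 0`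
hold simultaneously if and only if `a` lies outside the open interval
`(-2/Δx₁, -1/(R - Δx_N/2))`. -/
theorem cash_linear_acceptability_interval
    (N : ℕ) (hN : 2 ≤ N) (M : ℕ) (hM : 1 ≤ M)
    (R Δx₁ ΔxN : ℝ) (hR : 0 < R) (hΔ₁ : 0 < Δx₁) (hΔN : 0 < ΔxN)
    (hsum : Δx₁ + ΔxN ≤ R)
    (lam : ℝ → ℝ) (hlam : ∀ a, lam a = (M : ℝ) / (R * (1 + a * R / 2))) :
    ∀ a : ℝ, a ≠ -2 / R →
      ((0 ≤ lam a * (1 + a * Δx₁ / 2) ∧ 0 ≤ lam a * (1 + a * (R - ΔxN / 2))) ↔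
        a ∉ Set.Ioo (-2 / Δx₁) (-1 / (R - ΔxN / 2))) :=
  cash_linear_acceptability_interval_general M hM R Δx₁ ΔxN hR hΔ₁ hΔN hsum lam hlam
end

section
/- Assume that every index i with y_i ≥ 1 satisfies Δx_1/2 ≤ x_i − x_A ≤ R − Δx_N/2, and that there exist at least two indices j ≠ k with y_j ≥ 1, y_k ≥ 1 and x_j ≠ x_k. Then every real number a with 1 + a·(x_i − x_A) ≠ 0 for all i with y_i > 0 and g(a) = 0 satisfies −2/Δx_1 < a < −1/(R − Δx_N/2). In particular, every solution of F(a) = 0 lying between two zeros of g is unacceptable, i.e., lies in the open interval (−2/Δx_1, −1/(R − Δx_N/2)). -/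
/-!
At a zero `a` of `g` the terms `yᵢ tᵢ / (1 + a tᵢ)`, with `tᵢ = xᵢ - x_A > 0`, sum to zero,
so some counted bin has `1 + a tᵢ > 0` and another has `1 + a tᵢ < 0`. Since every counted
`tᵢ` lies in `[Δx₁/2, R - Δx_N/2]`, the first forces `a > -2/Δx₁` and the second
`a < -1/(R - Δx_N/2)`. A solution of `F a = 0` between two zeros `a₁ < a < a₂` of `g`
inherits the lower bound from `a₁` and the upper bound from `a₂`.
-/

open Finset

theorem exists_pos_denom_of_sum_div_eq_zero {ι : Type*} [Fintype ι] {w d : ι → ℝ}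
    (hw : ∀ i, 0 ≤ w i) {j : ι} (hwj : 0 < w j) (hd : ∀ i, 0 < w i → d i ≠ 0)
    (hsum : ∑ i, w i / d i = 0) : ∃ p, 0 < w p ∧ 0 < d p := by
  by_contra! hneg
  have hterm_nonneg : ∀ i, 0 ≤ -(w i / d i) := fun i => by
    rcases (hw i).eq_or_lt with hwi | hwi
    · simp [← hwi]
    · exact neg_nonneg.mpr (div_nonpos_of_nonneg_of_nonpos hwi.le (hneg i hwi))
  have hterm_pos : 0 < -(w j / d j) :=
    neg_pos.mpr (div_neg_of_pos_of_neg hwj ((hneg j hwj).lt_of_ne (hd j hwj)))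
  have : 0 < ∑ i, -(w i / d i) :=
    sum_pos' (fun i _ => hterm_nonneg i) ⟨j, mem_univ j, hterm_pos⟩
  simp [sum_neg_distrib, hsum] at this

theorem exists_neg_denom_of_sum_div_eq_zero {ι : Type*} [Fintype ι] {w d : ι → ℝ}
    (hw : ∀ i, 0 ≤ w i) {j : ι} (hwj : 0 < w j) (hd : ∀ i, 0 < w i → d i ≠ 0)
    (hsum : ∑ i, w i / d i = 0) : ∃ q, 0 < w q ∧ d q < 0 := by
  have hsum_neg : ∑ i, w i / -d i = 0 := by simp [div_neg, sum_neg_distrib, hsum]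
  obtain ⟨q, hwq, hdq⟩ := exists_pos_denom_of_sum_div_eq_zero hw hwj
    (fun i hi => neg_ne_zero.mpr (hd i hi)) hsum_neg
  exact ⟨q, hwq, neg_pos.mp hdq⟩

theorem neg_two_div_lt_of_one_add_mul_pos {a c t : ℝ} (hc : 0 < c) (ht : c / 2 ≤ t)
    (h : 0 < 1 + a * t) : -2 / c < a := by
  rw [div_lt_iff₀ hc]
  rcases le_or_gt 0 a with ha | ha
  · nlinarith
  · nlinarith [mul_le_mul_of_nonpos_left ht ha.le]

theorem lt_neg_one_div_of_one_add_mul_neg {a t T : ℝ} (ht : 0 < t) (htT : t ≤ T)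
    (h : 1 + a * t < 0) : a < -1 / T := by
  have ha : a < 0 := by nlinarith
  rw [lt_div_iff₀ (ht.trans_le htT)]
  nlinarith [mul_le_mul_of_nonpos_left htT ha.le]

theorem bounds_of_sum_div_one_add_mul_eq_zero {ι : Type*} [Fintype ι] {x : ι → ℝ}
    {y : ι → ℕ} {xA Δx₁ T a : ℝ} (hΔ₁ : 0 < Δx₁)
    (hpos : ∀ i, 1 ≤ y i → Δx₁ / 2 ≤ x i - xA ∧ x i - xA ≤ T)
    {j : ι} (hyj : 1 ≤ y j) (hden : ∀ i, 0 < y i → 1 + a * (x i - xA) ≠ 0)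
    (hsum : ∑ i, (y i : ℝ) * (x i - xA) / (1 + a * (x i - xA)) = 0) :
    -2 / Δx₁ < a ∧ a < -1 / T := by
  have hoffset_pos : ∀ i, 1 ≤ y i → 0 < x i - xA := fun i hi =>
    (half_pos hΔ₁).trans_le (hpos i hi).1
  have hweight_pos_iff : ∀ i, 0 < (y i : ℝ) * (x i - xA) ↔ 1 ≤ y i := fun i =>
    ⟨fun h => Nat.one_le_iff_ne_zero.mpr fun h0 => by simp [h0] at h,
      fun hi => mul_pos (by exact_mod_cast hi) (hoffset_pos i hi)⟩
  have hw : ∀ i, 0 ≤ (y i : ℝ) * (x i - xA) := fun i => by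
    rcases Nat.eq_zero_or_pos (y i) with h0 | h1
    · simp [h0]
    · exact ((hweight_pos_iff i).mpr h1).le
  have hd : ∀ i, 0 < (y i : ℝ) * (x i - xA) → 1 + a * (x i - xA) ≠ 0 := fun i hi =>
    hden i ((hweight_pos_iff i).mp hi)
  have hwj := (hweight_pos_iff j).mpr hyj
  obtain ⟨p, hwp, hdp⟩ := exists_pos_denom_of_sum_div_eq_zero hw hwj hd hsum
  obtain ⟨q, hwq, hdq⟩ := exists_neg_denom_of_sum_div_eq_zero hw hwj hd hsum
  rw [hweight_pos_iff] at hwp hwq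
  exact ⟨neg_two_div_lt_of_one_add_mul_pos hΔ₁ (hpos p hwp).1 hdp,
    lt_neg_one_div_of_one_add_mul_neg (hoffset_pos q hwq) (hpos q hwq).2 hdq⟩

theorem cash_linear_zeros_of_g_unacceptable_general
    (N : ℕ) (x : Fin N → ℝ) (xA R Δx₁ ΔxN : ℝ)
    (hΔ₁ : 0 < Δx₁)
    (y : Fin N → ℕ)
    (hpos : ∀ i, 1 ≤ y i → Δx₁ / 2 ≤ x i - xA ∧ x i - xA ≤ R - ΔxN / 2)
    (j : Fin N) (hyj : 1 ≤ y j)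
    (g F : ℝ → ℝ)
    (hg : ∀ a, g a = ∑ i, (y i : ℝ) * (x i - xA) / (1 + a * (x i - xA))) :
    (∀ a, (∀ i, 0 < y i → 1 + a * (x i - xA) ≠ 0) → g a = 0 →
      -2 / Δx₁ < a ∧ a < -1 / (R - ΔxN / 2)) ∧
    (∀ a a₁ a₂,
      (∀ i, 0 < y i → 1 + a₁ * (x i - xA) ≠ 0) → g a₁ = 0 →
      (∀ i, 0 < y i → 1 + a₂ * (x i - xA) ≠ 0) → g a₂ = 0 →
      a₁ < a → a < a₂ → F a = 0 →
      -2 / Δx₁ < a ∧ a < -1 / (R - ΔxN / 2)) := by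
  have hzero : ∀ a, (∀ i, 0 < y i → 1 + a * (x i - xA) ≠ 0) → g a = 0 →
      -2 / Δx₁ < a ∧ a < -1 / (R - ΔxN / 2) := fun a hden hga =>
    bounds_of_sum_div_one_add_mul_eq_zero hΔ₁ hpos hyj hden (hg a ▸ hga)
  refine ⟨hzero, fun a a₁ a₂ hden₁ hg₁ hden₂ hg₂ h₁ h₂ _ => ?_⟩
  exact ⟨(hzero a₁ hden₁ hg₁).1.trans h₁, h₂.trans (hzero a₂ hden₂ hg₂).2⟩

/-- If every counted bin center satisfies
`Δx₁/2 ≤ x i - xA ≤ R - Δx_N/2` and there are at least two counted bins with distinct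
centers, then every zero of `g` (in the domain of `g`) lies strictly inside the interval
`(-2/Δx₁, -1/(R - Δx_N/2))`; in particular every solution of `F a = 0` lying between two
zeros of `g` is unacceptable, i.e. lies in this open interval. -/
theorem cash_linear_zeros_of_g_unacceptable
    (N : ℕ) (x : Fin N → ℝ) (xA R Δx₁ ΔxN : ℝ)
    (hΔ₁ : 0 < Δx₁) (hΔN : 0 < ΔxN) (hR : 0 < R)
    (y : Fin N → ℕ)
    (hpos : ∀ i, 1 ≤ y i → Δx₁ / 2 ≤ x i - xA ∧ x i - xA ≤ R - ΔxN / 2)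
    (j k : Fin N) (hjk : j ≠ k) (hyj : 1 ≤ y j) (hyk : 1 ≤ y k) (hxjk : x j ≠ x k)
    (g F : ℝ → ℝ)
    (hg : ∀ a, g a = ∑ i, (y i : ℝ) * (x i - xA) / (1 + a * (x i - xA)))
    (hF : ∀ a, F a = 1 + (R / 2) * (a - (∑ i, (y i : ℝ)) / g a)) :
    (∀ a, (∀ i, 0 < y i → 1 + a * (x i - xA) ≠ 0) → g a = 0 →
      -2 / Δx₁ < a ∧ a < -1 / (R - ΔxN / 2)) ∧
    (∀ a a₁ a₂,
      (∀ i, 0 < y i → 1 + a₁ * (x i - xA) ≠ 0) → g a₁ = 0 →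
      (∀ i, 0 < y i → 1 + a₂ * (x i - xA) ≠ 0) → g a₂ = 0 →
      a₁ < a → a < a₂ → F a = 0 →
      -2 / Δx₁ < a ∧ a < -1 / (R - ΔxN / 2)) :=
  cash_linear_zeros_of_g_unacceptable_general N x xA R Δx₁ ΔxN hΔ₁ y hpos j hyj g F hg
end

section
/- Assume: the last bin carries a count, y_N ≥ 1 with x_N − x_A = R − Δx_N/2; every index i with y_i ≥ 1 satisfies Δx_1/2 ≤ x_i − x_A ≤ R − Δx_N/2; there are at least two indices with positive counts at distinct centers; R > Δx_N; and the asymptotic value F_∞ = 1 − (R/(2M))·Σ_{i=1}^N y_i/(x_i − x_A) is strictly negative. Then there exists a real number a > −1/(R − Δx_N/2) such that 1 + a·(x_i − x_A) ≠ 0 for all i with y_i > 0, g(a) ≠ 0, and F(a) = 0; i.e., the external solution of F(a) = 0 exists and is acceptable. -/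
/-! With `d i = x i - xA` and `Q = R - Δx_N/2`, every counted denominator `1 + a d i` is positive
on `(-1/Q, ∞)`, so there `g > 0` and `F a = 0` is equivalent to `∑ y i (d i - R/2)/(1 + a d i) = 0`.
As `a ↓ -1/Q` the last bin's term (with `d = Q > R/2`) blows up to `+∞` while every other term
stays bounded below; as `a → ∞`, `a` times the sum tends to `M - (R/2) ∑ y i / d i`, which is
`M F_∞ < 0`. The intermediate value theorem gives the root. -/

open Filter Topology Set

section

variable {ι : Type*} [Fintype ι]

/-- `F a = cashNumerator w d (R/2) a / g a` wherever `g a ≠ 0`. -/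
noncomputable def cashNumerator (w d : ι → ℝ) (c a : ℝ) : ℝ :=
  ∑ i, w i * (d i - c) / (1 + a * d i)

lemma one_add_mul_pos_of_neg_inv_lt {a d Q : ℝ} (hd : 0 < d) (hdQ : d ≤ Q) (ha : -1 / Q < a) :
    0 < 1 + a * d := by
  have hQ : 0 < Q := hd.trans_le hdQ
  rcases le_or_gt 0 a with h | h
  · positivity
  · have : -1 < a * Q := by rwa [div_lt_iff₀ hQ] at ha
    nlinarith

lemma mul_one_add_mul_sub_eq_cashNumerator (w d : ι → ℝ) (c a : ℝ)
    (ha : ∀ i, w i ≠ 0 → 1 + a * d i ≠ 0) :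
    (∑ i, w i * d i / (1 + a * d i)) * (1 + c * a) - c * ∑ i, w i = cashNumerator w d c a := by
  rw [Finset.sum_mul, Finset.mul_sum, ← Finset.sum_sub_distrib]
  refine Finset.sum_congr rfl fun i _ => ?_
  by_cases hw : w i = 0
  · simp [hw]
  · rw [eq_div_iff (ha i hw), sub_mul, mul_right_comm (w i * d i / _),
      div_mul_cancel₀ _ (ha i hw)]
    ring

lemma sum_mul_div_one_add_mul_pos {w d : ι → ℝ} {Q a : ℝ} (hw : ∀ i, 0 ≤ w i)
    (hd : ∀ i, w i ≠ 0 → 0 < d i ∧ d i ≤ Q) (ha : -1 / Q < a) {j : ι} (hwj : 0 < w j) :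
    0 < ∑ i, w i * d i / (1 + a * d i) := by
  have hterm : ∀ i, w i ≠ 0 → 0 < w i * d i / (1 + a * d i) := fun i hi =>
    div_pos (mul_pos ((hw i).lt_of_ne' hi) (hd i hi).1)
      (one_add_mul_pos_of_neg_inv_lt (hd i hi).1 (hd i hi).2 ha)
  refine Finset.sum_pos' (fun i _ => ?_) ⟨j, Finset.mem_univ j, hterm j hwj.ne'⟩
  by_cases hi : w i = 0
  · simp [hi]
  · exact (hterm i hi).le

lemma continuousOn_cashNumerator {w d : ι → ℝ} {Q : ℝ} (c : ℝ)
    (hd : ∀ i, w i ≠ 0 → 0 < d i ∧ d i ≤ Q) :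
    ContinuousOn (cashNumerator w d c) (Ioi (-1 / Q)) := by
  refine continuousOn_finsetSum _ fun i _ => ?_
  by_cases hi : w i = 0
  · simp only [hi, zero_mul, zero_div]
    exact continuousOn_const
  · exact continuousOn_const.div (by fun_prop) fun a ha =>
      (one_add_mul_pos_of_neg_inv_lt (hd i hi).1 (hd i hi).2 ha).ne'

lemma neg_le_mul_sub_div_one_add_mul {w d c Q a : ℝ} (hw : 0 ≤ w) (hd : 0 < d) (hdQ : d ≤ Q)
    (hc : 0 ≤ c) (hcQ : c < Q) (ha : -1 / Q < a) (ha0 : a ≤ 0) :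
    -(w * c * Q / (Q - c)) ≤ w * (d - c) / (1 + a * d) := by
  have hQ : 0 < Q := hd.trans_le hdQ
  have hden := one_add_mul_pos_of_neg_inv_lt hd hdQ ha
  have hK : 0 ≤ w * c * Q / (Q - c) := div_nonneg (by positivity) (by linarith)
  rcases le_or_gt c d with hcd | hdc
  · have : 0 ≤ w * (d - c) / (1 + a * d) := div_nonneg (mul_nonneg hw (by linarith)) hden.le
    linarith
  · -- for `d < c` the denominator stays above `1 - c/Q > 0`
    have hac : -(c / Q) ≤ a * c := by
      have : -1 / Q * c ≤ a * c := mul_le_mul_of_nonneg_right ha.le hc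
      rwa [div_mul_eq_mul_div, neg_one_mul, neg_div] at this
    have hden' : (Q - c) / Q ≤ 1 + a * d := by
      rw [sub_div, div_self hQ.ne']
      nlinarith
    have hKeq : w * c * Q / (Q - c) * ((Q - c) / Q) = w * c := by
      field_simp [(sub_pos.mpr hcQ).ne']
    rw [le_div_iff₀ hden]
    nlinarith [mul_le_mul_of_nonneg_left hden' hK, mul_nonneg hw hd.le]

lemma tendsto_const_div_one_add_mul_nhdsGT {w Q : ℝ} (hw : 0 < w) (hQ : 0 < Q) :
    Tendsto (fun a => w / (1 + a * Q)) (𝓝[>] (-1 / Q)) atTop := by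
  have hmaps : Tendsto (fun a => 1 + a * Q) (𝓝[>] (-1 / Q)) (𝓝[>] 0) := by
    refine tendsto_nhdsWithin_iff.mpr ⟨?_, eventually_nhdsWithin_of_forall fun a ha => ?_⟩
    · have h : Tendsto (fun a => 1 + a * Q) (𝓝 (-1 / Q)) (𝓝 (1 + -1 / Q * Q)) :=
        (show Continuous (fun a : ℝ => 1 + a * Q) by fun_prop).tendsto _
      rw [div_mul_cancel₀ _ hQ.ne', add_neg_cancel] at h
      exact h.mono_left nhdsWithin_le_nhds
    · rw [mem_Ioi, div_lt_iff₀ hQ] at ha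
      exact show 0 < 1 + a * Q by linarith
  simpa only [div_eq_mul_inv, Function.comp_def] using
    (tendsto_inv_nhdsGT_zero.comp hmaps).const_mul_atTop hw

lemma eventually_cashNumerator_pos {w d : ι → ℝ} {c Q : ℝ} (hw : ∀ i, 0 ≤ w i)
    (hd : ∀ i, w i ≠ 0 → 0 < d i ∧ d i ≤ Q) (hc : 0 ≤ c) (hcQ : c < Q)
    {j : ι} (hwj : 0 < w j) (hdj : d j = Q) :
    ∀ᶠ a in 𝓝[>] (-1 / Q), 0 < cashNumerator w d c a := by
  classical
  set K : ι → ℝ := fun i => w i * c * Q / (Q - c)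
  have hQ : 0 < Q := hc.trans_lt hcQ
  have hlow : ∀ a ∈ Ioc (-1 / Q) 0,
      w j * (Q - c) / (1 + a * Q) - ∑ i, K i ≤ cashNumerator w d c a := by
    intro a ⟨ha, ha0⟩
    have hterm : ∀ i, -K i ≤ w i * (d i - c) / (1 + a * d i) := fun i => by
      by_cases hi : w i = 0
      · simp [K, hi]
      · exact neg_le_mul_sub_div_one_add_mul (hw i) (hd i hi).1 (hd i hi).2 hc hcQ ha ha0
    have hKj : 0 ≤ K j := div_nonneg (by positivity) (by linarith)
    have hrest := Finset.sum_le_sum fun i (_ : i ∈ Finset.univ.erase j) => hterm i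
    rw [cashNumerator, ← Finset.add_sum_erase _ K (Finset.mem_univ j),
      ← Finset.add_sum_erase _ (fun i => w i * (d i - c) / (1 + a * d i)) (Finset.mem_univ j), hdj]
    rw [Finset.sum_neg_distrib] at hrest
    linarith
  have hlim := (tendsto_atTop_add_const_right _ (-∑ i, K i)
    (tendsto_const_div_one_add_mul_nhdsGT (mul_pos hwj (sub_pos.mpr hcQ)) hQ)).eventually_gt_atTop 0
  filter_upwards [hlim, Ioc_mem_nhdsGT (div_neg_of_neg_of_pos neg_one_lt_zero hQ)] with a h1 h2
  linarith [hlow a h2]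

lemma tendsto_div_one_add_mul_atTop {d : ℝ} (hd : d ≠ 0) :
    Tendsto (fun a : ℝ => a / (1 + a * d)) atTop (𝓝 d⁻¹) := by
  have h : Tendsto (fun a : ℝ => (a⁻¹ + d)⁻¹) atTop (𝓝 d⁻¹) := by
    simpa using (tendsto_inv_atTop_zero.add_const d).inv₀ (by simpa using hd)
  refine h.congr' ((eventually_ne_atTop 0).mono fun a ha => ?_)
  rw [show a⁻¹ + d = (1 + a * d) / a by field_simp, inv_div]

lemma tendsto_mul_cashNumerator_atTop {w d : ι → ℝ} (c : ℝ) (hd : ∀ i, w i ≠ 0 → d i ≠ 0) :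
    Tendsto (fun a => a * cashNumerator w d c a) atTop
      (𝓝 (∑ i, w i - c * ∑ i, w i / d i)) := by
  have hlim : ∑ i, w i - c * ∑ i, w i / d i = ∑ i, w i * (d i - c) * (d i)⁻¹ := by
    rw [Finset.mul_sum, ← Finset.sum_sub_distrib]
    refine Finset.sum_congr rfl fun i _ => ?_
    by_cases hi : w i = 0
    · simp [hi]
    · field_simp [hd i hi]
  have hfun : (fun a => a * cashNumerator w d c a) =
      fun a => ∑ i, w i * (d i - c) * (a / (1 + a * d i)) := by
    ext a
    rw [cashNumerator, Finset.mul_sum]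
    refine Finset.sum_congr rfl fun i _ => ?_
    ring
  rw [hlim, hfun]
  refine tendsto_finsetSum _ fun i _ => ?_
  by_cases hi : w i = 0
  · simp [hi]
  · exact (tendsto_div_one_add_mul_atTop (hd i hi)).const_mul _

lemma eventually_cashNumerator_neg {w d : ι → ℝ} {c : ℝ} (hd : ∀ i, w i ≠ 0 → d i ≠ 0)
    (hlim : ∑ i, w i - c * ∑ i, w i / d i < 0) :
    ∀ᶠ a in atTop, cashNumerator w d c a < 0 := by
  filter_upwards [(tendsto_mul_cashNumerator_atTop c hd).eventually_lt_const hlim,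
    eventually_ge_atTop 0] with a h ha
  exact neg_of_mul_neg_right h ha

lemma exists_cashNumerator_eq_zero {w d : ι → ℝ} {c Q : ℝ} (hw : ∀ i, 0 ≤ w i)
    (hd : ∀ i, w i ≠ 0 → 0 < d i ∧ d i ≤ Q) (hc : 0 ≤ c) (hcQ : c < Q)
    {j : ι} (hwj : 0 < w j) (hdj : d j = Q) (hlim : ∑ i, w i - c * ∑ i, w i / d i < 0) :
    ∃ a, -1 / Q < a ∧ cashNumerator w d c a = 0 := by
  obtain ⟨a₁, hpos, ha₁⟩ :=
    ((eventually_cashNumerator_pos hw hd hc hcQ hwj hdj).and self_mem_nhdsWithin).exists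
  obtain ⟨a₂, hneg, ha₁₂⟩ := ((eventually_cashNumerator_neg (fun i hi => (hd i hi).1.ne')
    hlim).and (eventually_ge_atTop a₁)).exists
  obtain ⟨a, ⟨ha, -⟩, h0⟩ := intermediate_value_Icc' ha₁₂
    ((continuousOn_cashNumerator c hd).mono ((Icc_subset_Ioi_iff ha₁₂).mpr ha₁))
    ⟨hneg.le, hpos.le⟩
  exact ⟨a, ha₁.trans_le ha, h0⟩

end

theorem cash_linear_external_solution_right_general
    (N : ℕ) (x : Fin N → ℝ) (xA R Δx₁ ΔxN : ℝ)
    (hΔ₁ : 0 < Δx₁) (hΔN : 0 < ΔxN) (hRΔ : ΔxN < R)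
    (y : Fin N → ℕ)
    (hpos : ∀ i, 1 ≤ y i → Δx₁ / 2 ≤ x i - xA ∧ x i - xA ≤ R - ΔxN / 2)
    (j : Fin N) (hyj : 1 ≤ y j) (hxj : x j - xA = R - ΔxN / 2)
    (g F : ℝ → ℝ)
    (hg : ∀ a, g a = ∑ i, (y i : ℝ) * (x i - xA) / (1 + a * (x i - xA)))
    (hF : ∀ a, F a = 1 + (R / 2) * (a - (∑ i, (y i : ℝ)) / g a))
    (hFinf : 1 - (R / (2 * ∑ i, (y i : ℝ))) * ∑ i, (y i : ℝ) / (x i - xA) < 0) :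
    ∃ a, -1 / (R - ΔxN / 2) < a ∧ (∀ i, 0 < y i → 1 + a * (x i - xA) ≠ 0) ∧
      g a ≠ 0 ∧ F a = 0 := by
  have hd : ∀ i, (y i : ℝ) ≠ 0 → 0 < x i - xA ∧ x i - xA ≤ R - ΔxN / 2 := fun i hi => by
    have := hpos i (Nat.one_le_iff_ne_zero.mpr (by exact_mod_cast hi))
    exact ⟨by linarith, this.2⟩
  have hyj' : (0 : ℝ) < y j := by exact_mod_cast hyj
  have hM : 0 < ∑ i, (y i : ℝ) :=
    Finset.sum_pos' (fun i _ => Nat.cast_nonneg _) ⟨j, Finset.mem_univ j, hyj'⟩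
  have hlim : ∑ i, (y i : ℝ) - R / 2 * ∑ i, (y i : ℝ) / (x i - xA) < 0 := by
    have : ∑ i, (y i : ℝ) - R / 2 * ∑ i, (y i : ℝ) / (x i - xA) = (∑ i, (y i : ℝ)) *
        (1 - (R / (2 * ∑ i, (y i : ℝ))) * ∑ i, (y i : ℝ) / (x i - xA)) := by
      field_simp
    rw [this]
    exact mul_neg_of_pos_of_neg hM hFinf
  obtain ⟨a, ha, hroot⟩ := exists_cashNumerator_eq_zero (fun i => Nat.cast_nonneg (y i)) hd
    (by linarith) (by linarith) hyj' hxj hlim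
  have hden : ∀ i, (y i : ℝ) ≠ 0 → 0 < 1 + a * (x i - xA) := fun i hi =>
    one_add_mul_pos_of_neg_inv_lt (hd i hi).1 (hd i hi).2 ha
  have hga : 0 < g a := hg a ▸ sum_mul_div_one_add_mul_pos (fun i => Nat.cast_nonneg _) hd ha hyj'
  have hkey := mul_one_add_mul_sub_eq_cashNumerator (fun i => (y i : ℝ)) (fun i => x i - xA)
    (R / 2) a fun i hi => (hden i hi).ne'
  rw [hroot, ← hg a] at hkey
  refine ⟨a, ha, fun i hi => (hden i (by positivity)).ne', hga.ne', ?_⟩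
  have hFg : F a * g a = g a * (1 + R / 2 * a) - R / 2 * ∑ i, (y i : ℝ) := by
    rw [hF]
    field_simp
    ring
  rw [hkey] at hFg
  exact (mul_eq_zero.mp hFg).resolve_right hga.ne'

/-- If the last bin carries a count (`y j ≥ 1` with
`x j - xA = R - Δx_N/2`), all counted centers satisfy `Δx₁/2 ≤ x i - xA ≤ R - Δx_N/2`,
there are two counted bins with distinct centers, `R > Δx_N`, and the asymptotic value
`F_∞ = 1 - (R/(2M)) * ∑ i, y i/(x i - xA)` is strictly negative, then the external
solution of `F a = 0` exists and is acceptable: there is `a > -1/(R - Δx_N/2)` in the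
domain of `F` with `F a = 0`. -/
theorem cash_linear_external_solution_right
    (N : ℕ) (x : Fin N → ℝ) (xA R Δx₁ ΔxN : ℝ)
    (hΔ₁ : 0 < Δx₁) (hΔN : 0 < ΔxN) (hRΔ : ΔxN < R)
    (y : Fin N → ℕ)
    (hpos : ∀ i, 1 ≤ y i → Δx₁ / 2 ≤ x i - xA ∧ x i - xA ≤ R - ΔxN / 2)
    (j : Fin N) (hyj : 1 ≤ y j) (hxj : x j - xA = R - ΔxN / 2)
    (k l : Fin N) (hkl : k ≠ l) (hyk : 1 ≤ y k) (hyl : 1 ≤ y l) (hxkl : x k ≠ x l)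
    (g F : ℝ → ℝ)
    (hg : ∀ a, g a = ∑ i, (y i : ℝ) * (x i - xA) / (1 + a * (x i - xA)))
    (hF : ∀ a, F a = 1 + (R / 2) * (a - (∑ i, (y i : ℝ)) / g a))
    (hFinf : 1 - (R / (2 * ∑ i, (y i : ℝ))) * ∑ i, (y i : ℝ) / (x i - xA) < 0) :
    ∃ a, -1 / (R - ΔxN / 2) < a ∧ (∀ i, 0 < y i → 1 + a * (x i - xA) ≠ 0) ∧
      g a ≠ 0 ∧ F a = 0 :=
  cash_linear_external_solution_right_general N x xA R Δx₁ ΔxN hΔ₁ hΔN hRΔ y hpos j hyj hxj g F hg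
    hF hFinf
end

section
/- Assume there exist at least two indices j ≠ k with y_j ≥ 1, y_k ≥ 1 and x_j ≠ x_k, and that every index i with y_i ≥ 1 satisfies Δx_1/2 ≤ x_i − x_A ≤ R − Δx_N/2. Then there is at most one real number a lying outside the open interval (−2/Δx_1, −1/(R − Δx_N/2)) such that 1 + a·(x_i − x_A) ≠ 0 for all i with y_i > 0, g(a) ≠ 0, and F(a) = 0. In other words, the acceptable maximum-likelihood solution of the linear model, when it exists, is unique. -/
/-!
Write `t i = x i - xA` and `c = R / 2`. Given `g a ≠ 0`, the equation `F a = 0` says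
`(1 + a c) g a = c M`, i.e. `K a := ∑ y i (t i - c) / (1 + a t i) = 0`. The identity
`(1 + a₁ c) K a₁ - (1 + a₂ c) K a₂ = (a₂ - a₁) ∑ y i (t i - c)² / ((1 + a₁ t i) (1 + a₂ t i))`
then forces `a₁ = a₂`: for acceptable `a` the denominators `1 + a t i` of the counted bins all
have one sign, so the last sum has a strict sign, because some counted `t i` differs from `c`.
-/

open Finset

def ConstStrictSign {ι : Type*} (p : ι → Prop) (d : ι → ℝ) : Prop :=
  (∀ i, p i → 0 < d i) ∨ ∀ i, p i → d i < 0

namespace ConstStrictSign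

variable {ι : Type*} {p : ι → Prop} {d e : ι → ℝ}

theorem ne_zero (hd : ConstStrictSign p d) (i : ι) (hi : p i) : d i ≠ 0 := by
  rcases hd with hd | hd
  · exact (hd i hi).ne'
  · exact (hd i hi).ne

theorem of_nonneg_or_nonpos (h : (∀ i, p i → 0 ≤ d i) ∨ ∀ i, p i → d i ≤ 0)
    (hne : ∀ i, p i → d i ≠ 0) : ConstStrictSign p d := by
  rcases h with h | h
  · exact Or.inl fun i hi => (h i hi).lt_of_ne (hne i hi).symm
  · exact Or.inr fun i hi => (h i hi).lt_of_ne (hne i hi)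

theorem mul (hd : ConstStrictSign p d) (he : ConstStrictSign p e) :
    ConstStrictSign p (d * e) := by
  rcases hd with hd | hd <;> rcases he with he | he
  · exact Or.inl fun i hi => mul_pos (hd i hi) (he i hi)
  · exact Or.inr fun i hi => mul_neg_of_pos_of_neg (hd i hi) (he i hi)
  · exact Or.inr fun i hi => mul_neg_of_neg_of_pos (hd i hi) (he i hi)
  · exact Or.inl fun i hi => mul_pos_of_neg_of_neg (hd i hi) (he i hi)

end ConstStrictSign

theorem one_add_mul_nonpos {a t Δ : ℝ} (hΔ : 0 < Δ) (ha : a ≤ -2 / Δ) (ht : Δ / 2 ≤ t) :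
    1 + a * t ≤ 0 := by
  have haΔ : a * Δ ≤ -2 := (le_div_iff₀ hΔ).mp ha
  nlinarith

theorem one_add_mul_nonneg {a t W : ℝ} (ha : -1 / W ≤ a) (ht₀ : 0 < t) (ht : t ≤ W) :
    0 ≤ 1 + a * t := by
  have hW : 0 < W := ht₀.trans_le ht
  have haW : -1 ≤ a * W := (div_le_iff₀ hW).mp ha
  rcases le_or_gt 0 a with ha₀ | ha₀
  · positivity
  · nlinarith

theorem constStrictSign_one_add_mul {ι : Type*} {p : ι → Prop} {t : ι → ℝ} {a Δ W : ℝ}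
    (hΔ : 0 < Δ) (ha : a ∉ Set.Ioo (-2 / Δ) (-1 / W))
    (ht : ∀ i, p i → t i ∈ Set.Icc (Δ / 2) W) (hden : ∀ i, p i → 1 + a * t i ≠ 0) :
    ConstStrictSign p fun i => 1 + a * t i := by
  rw [Set.mem_Ioo, not_and_or, not_lt, not_lt] at ha
  refine .of_nonneg_or_nonpos ?_ hden
  rcases ha with ha | ha
  · exact Or.inr fun i hi => one_add_mul_nonpos hΔ ha (ht i hi).1
  · exact Or.inl fun i hi =>
      one_add_mul_nonneg ha ((half_pos hΔ).trans_le (ht i hi).1) (ht i hi).2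

section WeightedSums

variable {ι : Type*} [Fintype ι] {w t : ι → ℝ}

theorem sum_mul_sq_div_pos {u d : ι → ℝ} (hw : ∀ i, 0 ≤ w i) (hd : ∀ i, w i ≠ 0 → 0 < d i)
    {i₀ : ι} (hw₀ : w i₀ ≠ 0) (hu₀ : u i₀ ≠ 0) : 0 < ∑ i, w i * u i ^ 2 / d i := by
  refine sum_pos' (fun i _ => ?_) ⟨i₀, mem_univ i₀, ?_⟩
  · by_cases hwi : w i = 0
    · simp [hwi]
    · exact div_nonneg (mul_nonneg (hw i) (sq_nonneg _)) (hd i hwi).le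
  · exact div_pos (mul_pos ((hw i₀).lt_of_ne' hw₀) (pow_two_pos_of_ne_zero hu₀)) (hd i₀ hw₀)

theorem sum_mul_sq_div_ne_zero {u d : ι → ℝ} (hw : ∀ i, 0 ≤ w i)
    (hd : ConstStrictSign (fun i => w i ≠ 0) d) {i₀ : ι} (hw₀ : w i₀ ≠ 0) (hu₀ : u i₀ ≠ 0) :
    ∑ i, w i * u i ^ 2 / d i ≠ 0 := by
  rcases hd with hd | hd
  · exact (sum_mul_sq_div_pos hw hd hw₀ hu₀).ne'
  · have hneg := sum_mul_sq_div_pos (d := -d) hw (fun i hi => neg_pos.2 (hd i hi)) hw₀ hu₀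
    simp only [Pi.neg_apply, div_neg, sum_neg_distrib, neg_pos] at hneg
    exact hneg.ne

theorem sum_mul_sub_div_one_add_mul {a c : ℝ} (hden : ∀ i, w i ≠ 0 → 1 + a * t i ≠ 0) :
    ∑ i, w i * (t i - c) / (1 + a * t i) =
      (1 + a * c) * ∑ i, w i * t i / (1 + a * t i) - c * ∑ i, w i := by
  rw [mul_sum, mul_sum, ← sum_sub_distrib]
  refine sum_congr rfl fun i _ => ?_
  by_cases hwi : w i = 0
  · simp [hwi]
  · rw [mul_div_assoc', div_sub' (hden i hwi), div_left_inj' (hden i hwi)]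
    ring

theorem mul_sum_sub_div_sub_mul_sum_sub_div {a₁ a₂ c : ℝ} (hden₁ : ∀ i, w i ≠ 0 → 1 + a₁ * t i ≠ 0)
    (hden₂ : ∀ i, w i ≠ 0 → 1 + a₂ * t i ≠ 0) :
    (1 + a₁ * c) * ∑ i, w i * (t i - c) / (1 + a₁ * t i) -
        (1 + a₂ * c) * ∑ i, w i * (t i - c) / (1 + a₂ * t i) =
      (a₂ - a₁) * ∑ i, w i * (t i - c) ^ 2 / ((1 + a₁ * t i) * (1 + a₂ * t i)) := by
  rw [mul_sum, mul_sum, mul_sum, ← sum_sub_distrib]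
  refine sum_congr rfl fun i _ => ?_
  by_cases hwi : w i = 0
  · simp [hwi]
  · rw [mul_div_assoc', mul_div_assoc', mul_div_assoc',
      div_sub_div _ _ (hden₁ i hwi) (hden₂ i hwi)]
    ring

theorem eq_of_sum_mul_sub_div_eq_zero {a₁ a₂ c : ℝ} (hw : ∀ i, 0 ≤ w i)
    (h₁ : ConstStrictSign (fun i => w i ≠ 0) fun i => 1 + a₁ * t i)
    (h₂ : ConstStrictSign (fun i => w i ≠ 0) fun i => 1 + a₂ * t i)
    {i₀ : ι} (hw₀ : w i₀ ≠ 0) (ht₀ : t i₀ ≠ c)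
    (hK₁ : ∑ i, w i * (t i - c) / (1 + a₁ * t i) = 0)
    (hK₂ : ∑ i, w i * (t i - c) / (1 + a₂ * t i) = 0) : a₁ = a₂ := by
  have hsq := mul_sum_sub_div_sub_mul_sum_sub_div (c := c) h₁.ne_zero h₂.ne_zero
  rw [hK₁, hK₂, mul_zero, mul_zero, sub_self, eq_comm, mul_eq_zero, sub_eq_zero] at hsq
  exact (hsq.resolve_right <|
    sum_mul_sq_div_ne_zero hw (h₁.mul h₂) hw₀ (sub_ne_zero.2 ht₀)).symm

end WeightedSums

theorem cash_linear_acceptable_solution_unique_general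
    (N : ℕ) (x : Fin N → ℝ) (xA R Δx₁ ΔxN : ℝ)
    (hΔ₁ : 0 < Δx₁)
    (y : Fin N → ℕ)
    (hpos : ∀ i, 1 ≤ y i → Δx₁ / 2 ≤ x i - xA ∧ x i - xA ≤ R - ΔxN / 2)
    (j k : Fin N) (hyj : 1 ≤ y j) (hyk : 1 ≤ y k) (hxjk : x j ≠ x k)
    (g F : ℝ → ℝ)
    (hg : ∀ a, g a = ∑ i, (y i : ℝ) * (x i - xA) / (1 + a * (x i - xA)))
    (hF : ∀ a, F a = 1 + (R / 2) * (a - (∑ i, (y i : ℝ)) / g a)) :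
    ∀ a₁ a₂ : ℝ,
      a₁ ∉ Set.Ioo (-2 / Δx₁) (-1 / (R - ΔxN / 2)) →
      (∀ i, 0 < y i → 1 + a₁ * (x i - xA) ≠ 0) → g a₁ ≠ 0 → F a₁ = 0 →
      a₂ ∉ Set.Ioo (-2 / Δx₁) (-1 / (R - ΔxN / 2)) →
      (∀ i, 0 < y i → 1 + a₂ * (x i - xA) ≠ 0) → g a₂ ≠ 0 → F a₂ = 0 →
      a₁ = a₂ := by
  intro a₁ a₂ hacc₁ hden₁ hg₁ hF₁ hacc₂ hden₂ hg₂ hF₂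
  have hcounted : ∀ i, (y i : ℝ) ≠ 0 → 0 < y i :=
    fun i hi => Nat.pos_of_ne_zero (by exact_mod_cast hi)
  have hsign : ∀ a, a ∉ Set.Ioo (-2 / Δx₁) (-1 / (R - ΔxN / 2)) →
      (∀ i, 0 < y i → 1 + a * (x i - xA) ≠ 0) →
      ConstStrictSign (fun i => (y i : ℝ) ≠ 0) fun i => 1 + a * (x i - xA) :=
    fun a hacc hden => constStrictSign_one_add_mul hΔ₁ hacc (fun i hi => hpos i (hcounted i hi))
      fun i hi => hden i (hcounted i hi)
  have hscore : ∀ a, (∀ i, 0 < y i → 1 + a * (x i - xA) ≠ 0) → g a ≠ 0 → F a = 0 →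
      ∑ i, (y i : ℝ) * (x i - xA - R / 2) / (1 + a * (x i - xA)) = 0 := by
    intro a hden hga hFa
    rw [sum_mul_sub_div_one_add_mul (t := fun i => x i - xA) fun i hi => hden i (hcounted i hi),
      ← hg]
    rw [hF] at hFa
    field_simp at hFa
    linarith
  obtain ⟨i₀, hy₀, ht₀⟩ : ∃ i₀, (y i₀ : ℝ) ≠ 0 ∧ x i₀ - xA ≠ R / 2 := by
    by_cases hj : x j - xA = R / 2
    · exact ⟨k, by positivity, fun hk => hxjk (by linarith)⟩
    · exact ⟨j, by positivity, hj⟩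
  exact eq_of_sum_mul_sub_div_eq_zero (fun i => Nat.cast_nonneg _) (hsign a₁ hacc₁ hden₁)
    (hsign a₂ hacc₂ hden₂) hy₀ ht₀ (hscore a₁ hden₁ hg₁ hF₁) (hscore a₂ hden₂ hg₂ hF₂)

/-- If there are at least two counted bins with distinct centers and all
counted centers satisfy `Δx₁/2 ≤ x i - xA ≤ R - Δx_N/2`, then there is at most one
acceptable solution of `F a = 0`, i.e. at most one `a` outside the open interval
`(-2/Δx₁, -1/(R - Δx_N/2))`, in the domain of `F`, with `F a = 0`. -/
theorem cash_linear_acceptable_solution_unique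
    (N : ℕ) (x : Fin N → ℝ) (xA R Δx₁ ΔxN : ℝ)
    (hΔ₁ : 0 < Δx₁) (hΔN : 0 < ΔxN) (hR : 0 < R)
    (y : Fin N → ℕ)
    (hpos : ∀ i, 1 ≤ y i → Δx₁ / 2 ≤ x i - xA ∧ x i - xA ≤ R - ΔxN / 2)
    (j k : Fin N) (hjk : j ≠ k) (hyj : 1 ≤ y j) (hyk : 1 ≤ y k) (hxjk : x j ≠ x k)
    (g F : ℝ → ℝ)
    (hg : ∀ a, g a = ∑ i, (y i : ℝ) * (x i - xA) / (1 + a * (x i - xA)))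
    (hF : ∀ a, F a = 1 + (R / 2) * (a - (∑ i, (y i : ℝ)) / g a)) :
    ∀ a₁ a₂ : ℝ,
      a₁ ∉ Set.Ioo (-2 / Δx₁) (-1 / (R - ΔxN / 2)) →
      (∀ i, 0 < y i → 1 + a₁ * (x i - xA) ≠ 0) → g a₁ ≠ 0 → F a₁ = 0 →
      a₂ ∉ Set.Ioo (-2 / Δx₁) (-1 / (R - ΔxN / 2)) →
      (∀ i, 0 < y i → 1 + a₂ * (x i - xA) ≠ 0) → g a₂ ≠ 0 → F a₂ = 0 →
      a₁ = a₂ :=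
  cash_linear_acceptable_solution_unique_general N x xA R Δx₁ ΔxN hΔ₁ y hpos j k hyj hyk hxjk g F hg
    hF
end

section
/- Let Δx > 0, let N ≥ 2 be an integer, and set R = N·Δx. Then ∫₀¹ df/(Δx/2 + f·(R − Δx)) = (ln(R − Δx/2) − ln(Δx/2))/(R − Δx) = ln(2N − 1)/((N − 1)·Δx), and this quantity is strictly greater than 2/R; equivalently, N·ln(2N − 1) > 2(N − 1). -/
open Real

theorem integral_one_div_affine {a b : ℝ} (ha : 0 < a) (hab : 0 < a + b) (hb : b ≠ 0) :
    ∫ f in (0 : ℝ)..1, 1 / (a + f * b) = (log (a + b) - log a) / b := by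
  have hcomp := intervalIntegral.integral_comp_mul_add (fun x : ℝ => 1 / x) hb a
    (a := 0) (b := 1)
  simp only [mul_zero, zero_add, mul_one] at hcomp
  rw [integral_one_div_of_pos ha (by rwa [add_comm]), add_comm b, log_div hab.ne' ha.ne',
    smul_eq_mul] at hcomp
  rw [← inv_mul_eq_div, ← hcomp]
  congr 1 with f
  ring

theorem two_mul_sub_one_lt_mul_log {n : ℝ} (hn : 1 < n) :
    2 * (n - 1) < n * log (2 * n - 1) := by
  have h := lt_log_one_add_of_pos (x := 2 * (n - 1)) (by linarith)
  rw [show 1 + 2 * (n - 1) = 2 * n - 1 by ring, show 2 * (n - 1) + 2 = 2 * n by ring,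
    mul_div_mul_left _ _ two_ne_zero, div_lt_iff₀ (by linarith)] at h
  linarith

/-- For `Δx > 0`, an integer `N ≥ 2`, and `R = N * Δx`, the expectation
`∫₀¹ df / (Δx/2 + f*(R - Δx))` equals `(ln(R - Δx/2) - ln(Δx/2)) / (R - Δx)`, which
equals `ln(2N - 1) / ((N - 1) * Δx)` and is strictly greater than `2/R`; equivalently,
`N * ln(2N - 1) > 2 * (N - 1)`. -/
theorem uniform_expectation_reciprocal_distance
    (Δx : ℝ) (hΔ : 0 < Δx) (N : ℕ) (hN : 2 ≤ N) (R : ℝ) (hR : R = N * Δx) :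
    (∫ f in (0:ℝ)..1, 1 / (Δx / 2 + f * (R - Δx))) =
      (Real.log (R - Δx / 2) - Real.log (Δx / 2)) / (R - Δx) ∧
    (Real.log (R - Δx / 2) - Real.log (Δx / 2)) / (R - Δx) =
      Real.log (2 * (N : ℝ) - 1) / (((N : ℝ) - 1) * Δx) ∧
    2 / R < Real.log (2 * (N : ℝ) - 1) / (((N : ℝ) - 1) * Δx) ∧
    2 * ((N : ℝ) - 1) < (N : ℝ) * Real.log (2 * (N : ℝ) - 1) := by
  have hN_gt_one : (1 : ℝ) < N := by exact_mod_cast hN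
  have hwidth : R - Δx = ((N : ℝ) - 1) * Δx := by rw [hR]; ring
  have hfar : R - Δx / 2 = Δx / 2 * (2 * (N : ℝ) - 1) := by rw [hR]; ring
  have hwidth_pos : 0 < ((N : ℝ) - 1) * Δx := mul_pos (by linarith) hΔ
  have hlog := two_mul_sub_one_lt_mul_log hN_gt_one
  refine ⟨?_, ?_, ?_, hlog⟩
  · rw [← show Δx / 2 + (R - Δx) = R - Δx / 2 by ring]
    exact integral_one_div_affine (by positivity) (by linarith) (by linarith)
  · rw [hfar, hwidth, log_mul (by positivity) (by linarith), add_sub_cancel_left]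
  · rw [div_lt_div_iff₀ (by rw [hR]; positivity) hwidth_pos, hR]
    nlinarith
end

section
/- Assume R > 0 and M = Σ_{i=1}^N y_i ≥ 1. On the domain of pairs (λ, a) with λ > 0 and 1 + a·(x_i − x_A) > 0 for every i with y_i > 0, define C(λ, a) = 2λR·(1 + aR/2) − 2M·ln(λ) − 2·Σ_{i=1}^N y_i·ln(1 + a·(x_i − x_A)). Then ∂C/∂λ(λ, a) = 0 and ∂C/∂a(λ, a) = 0 hold simultaneously if and only if 1 + aR/2 > 0, λ = M/(R·(1 + aR/2)), g(a) ≠ 0, and F(a) = 0. -/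
/-!
Both partial derivatives are explicit: `∂C/∂λ = 2R(1 + aR/2) - 2M/λ` and `∂C/∂a = λR² - 2g(a)`
(bins with `y_i = 0` contribute nothing, so only the counted bins need `1 + a(x_i - x_A) > 0`).
Since `λ, M > 0`, the first vanishes iff `1 + aR/2 > 0` and `λ = M/(R(1 + aR/2))`. Substituting,
the second vanishes iff `g(a) = MR/(2(1 + aR/2))`, which, as this value is nonzero, is the
equation `F(a) = 0` with `g(a) ≠ 0` after clearing denominators.
-/

open Real Finset

theorem hasDerivAt_sum_mul_log_one_add_mul {ι : Type*} (s : Finset ι) (w d : ι → ℝ) {a : ℝ}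
    (h : ∀ i ∈ s, w i ≠ 0 → 1 + a * d i ≠ 0) :
    HasDerivAt (fun a' => ∑ i ∈ s, w i * log (1 + a' * d i))
      (∑ i ∈ s, w i * d i / (1 + a * d i)) a := by
  refine HasDerivAt.fun_sum fun i hi => ?_
  by_cases hw : w i = 0
  · simpa [hw] using hasDerivAt_const a (0 : ℝ)
  · have hlin : HasDerivAt (fun a' => 1 + a' * d i) (d i) a := by
      simpa using ((hasDerivAt_id a).mul_const (d i)).const_add 1
    simpa [mul_div_assoc] using (hlin.log (h i hi hw)).const_mul (w i)

section CashLinear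

variable {ι : Type*} [Fintype ι] (R xA : ℝ) (x : ι → ℝ) (y : ι → ℕ)

noncomputable def cashLinear (l a : ℝ) : ℝ :=
  2 * l * R * (1 + a * R / 2) - 2 * (∑ i, (y i : ℝ)) * log l
    - 2 * ∑ i, (y i : ℝ) * log (1 + a * (x i - xA))

theorem hasDerivAt_cashLinear_left {l : ℝ} (hl : l ≠ 0) (a : ℝ) :
    HasDerivAt (fun l' => cashLinear R xA x y l' a)
      (2 * R * (1 + a * R / 2) - 2 * (∑ i, (y i : ℝ)) / l) l := by
  have hlin : HasDerivAt (fun l' => 2 * l' * R * (1 + a * R / 2)) (2 * R * (1 + a * R / 2)) l := by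
    simpa using (((hasDerivAt_id l).const_mul 2).mul_const R).mul_const (1 + a * R / 2)
  have hlog := (hasDerivAt_log hl).const_mul (2 * ∑ i, (y i : ℝ))
  rw [← div_eq_mul_inv] at hlog
  exact (hlin.sub hlog).sub_const _

theorem hasDerivAt_cashLinear_right (l : ℝ) {a : ℝ}
    (ha : ∀ i, 0 < y i → 0 < 1 + a * (x i - xA)) :
    HasDerivAt (fun a' => cashLinear R xA x y l a')
      (2 * l * R * (R / 2) - 2 * ∑ i, (y i : ℝ) * (x i - xA) / (1 + a * (x i - xA))) a := by
  have hlin : HasDerivAt (fun a' => 2 * l * R * (1 + a' * R / 2)) (2 * l * R * (R / 2)) a := by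
    simpa using (((hasDerivAt_id a).mul_const R).div_const 2).const_add 1 |>.const_mul (2 * l * R)
  have hlog := hasDerivAt_sum_mul_log_one_add_mul univ (fun i => (y i : ℝ)) (fun i => x i - xA)
    (a := a) fun i _ hy => (ha i (Nat.pos_of_ne_zero (by exact_mod_cast hy))).ne'
  exact (hlin.sub_const _).sub (hlog.const_mul 2)

end CashLinear

theorem stationary_intensity_iff {R M l c : ℝ} (hR : 0 < R) (hM : 0 < M) (hl : 0 < l) :
    2 * R * c - 2 * M / l = 0 ↔ 0 < c ∧ l = M / (R * c) := by
  constructor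
  · intro h
    have hlc : l * (R * c) = M := by field_simp at h; linarith
    have hRc : 0 < R * c := pos_of_mul_pos_right (hlc ▸ hM) hl.le
    exact ⟨pos_of_mul_pos_right hRc hR.le, (eq_div_iff hRc.ne').2 hlc⟩
  · rintro ⟨hc, rfl⟩
    field_simp
    ring

theorem stationary_slope_iff {R M a l G : ℝ} (hR : 0 < R) (hM : 0 < M)
    (hs : 0 < 1 + a * R / 2) (hl : l = M / (R * (1 + a * R / 2))) :
    2 * l * R * (R / 2) - 2 * G = 0 ↔ G ≠ 0 ∧ 1 + R / 2 * (a - M / G) = 0 := by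
  have hlR : 2 * l * R * (R / 2) = 2 * (M * R / (2 * (1 + a * R / 2))) := by
    subst hl; field_simp
  rw [hlR, sub_eq_zero, mul_right_inj' two_ne_zero]
  constructor
  · rintro rfl
    exact ⟨by positivity, by field_simp; ring⟩
  · rintro ⟨hG, hF⟩
    rw [div_eq_iff (by positivity)]
    field_simp at hF
    linear_combination -hF

theorem cash_linear_stationary_iff_general
    (N : ℕ) (x : Fin N → ℝ) (xA R : ℝ)
    (hRpos : 0 < R)
    (y : Fin N → ℕ) (hM : 1 ≤ ∑ i, y i)
    (C : ℝ → ℝ → ℝ)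
    (hC : ∀ l a, C l a = 2 * l * R * (1 + a * R / 2)
      - 2 * (∑ i, (y i : ℝ)) * Real.log l
      - 2 * ∑ i, (y i : ℝ) * Real.log (1 + a * (x i - xA)))
    (l a : ℝ) (hl : 0 < l) (ha : ∀ i, 0 < y i → 0 < 1 + a * (x i - xA)) :
    (deriv (fun l' => C l' a) l = 0 ∧ deriv (fun a' => C l a') a = 0) ↔
      (0 < 1 + a * R / 2 ∧
       l = (∑ i, (y i : ℝ)) / (R * (1 + a * R / 2)) ∧
       (∑ i, (y i : ℝ) * (x i - xA) / (1 + a * (x i - xA))) ≠ 0 ∧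
       1 + (R / 2) * (a - (∑ i, (y i : ℝ)) /
         (∑ i, (y i : ℝ) * (x i - xA) / (1 + a * (x i - xA)))) = 0) := by
  obtain rfl : C = cashLinear R xA x y := funext₂ hC
  have hMpos : (0 : ℝ) < ∑ i, (y i : ℝ) := by exact_mod_cast hM
  rw [(hasDerivAt_cashLinear_left R xA x y hl.ne' a).deriv,
    (hasDerivAt_cashLinear_right R xA x y l ha).deriv, stationary_intensity_iff hRpos hMpos hl,
    and_assoc]
  exact and_congr_right fun hs =>
    and_congr_right fun hl_eq => stationary_slope_iff hRpos hMpos hs hl_eq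

/-- On the domain `λ > 0`, `1 + a*(x i - xA) > 0` for all counted `i`,
the stationarity conditions `∂C/∂λ = 0` and `∂C/∂a = 0` for the Cash statistic of the
linear model hold simultaneously if and only if `1 + a*R/2 > 0`,
`λ = M/(R*(1 + a*R/2))`, `g(a) ≠ 0` and `F(a) = 0`. -/
theorem cash_linear_stationary_iff
    (N : ℕ) (x : Fin N → ℝ) (xA xB R : ℝ)
    (hx : ∀ i, xA < x i ∧ x i < xB)
    (hR : R = xB - xA) (hRpos : 0 < R)
    (y : Fin N → ℕ) (hM : 1 ≤ ∑ i, y i)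
    (C : ℝ → ℝ → ℝ)
    (hC : ∀ l a, C l a = 2 * l * R * (1 + a * R / 2)
      - 2 * (∑ i, (y i : ℝ)) * Real.log l
      - 2 * ∑ i, (y i : ℝ) * Real.log (1 + a * (x i - xA)))
    (l a : ℝ) (hl : 0 < l) (ha : ∀ i, 0 < y i → 0 < 1 + a * (x i - xA)) :
    (deriv (fun l' => C l' a) l = 0 ∧ deriv (fun a' => C l a') a = 0) ↔
      (0 < 1 + a * R / 2 ∧
       l = (∑ i, (y i : ℝ)) / (R * (1 + a * R / 2)) ∧
       (∑ i, (y i : ℝ) * (x i - xA) / (1 + a * (x i - xA))) ≠ 0 ∧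
       1 + (R / 2) * (a - (∑ i, (y i : ℝ)) /
         (∑ i, (y i : ℝ) * (x i - xA) / (1 + a * (x i - xA)))) = 0) :=
  cash_linear_stationary_iff_general N x xA R hRpos y hM C hC l a hl ha
end
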